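/- Let μ be a probability measure on 2^X satisfying the FKG condition, and let A_1, A_2, A_3 ⊆ 2^X be principal upper sets: A_i = {S ⊆ X : C_i ⊆ S} for some C_i ⊆ X. Then E_{3,μ}(A_1,A_2,A_3) = 2·μ(A_1∩A_2∩A_3) − [ μ(A_1)·μ(A_2∩A_3) + μ(A_2)·μ(A_1∩A_3) + μ(A_3)·μ(A_1∩A_2) − μ(A_1)·μ(A_2)·μ(A_3) ] ≥ 0. -/
import Mathlib


open Finset
open scoped Classical FinsetFamily

noncomputable section

/-- Total mass the measure `μ` assigns to a family `𝒜` of subsets of `X = Fin m`. -/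
def famMeas {m : ℕ} (μ : Finset (Fin m) → ℝ) (𝒜 : Finset (Finset (Fin m))) : ℝ :=
  ∑ A ∈ 𝒜, μ A

/-- `μ` is a probability measure on `2^X`. -/
def IsProbMeasure {m : ℕ} (μ : Finset (Fin m) → ℝ) : Prop :=
  (∀ A, 0 ≤ μ A) ∧ ∑ A : Finset (Fin m), μ A = 1

/-- The FKG lattice condition on `μ`. -/
def FKGCondition {m : ℕ} (μ : Finset (Fin m) → ℝ) : Prop :=
  ∀ A B : Finset (Fin m), μ A * μ B ≤ μ (A ∩ B) * μ (A ∪ B)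

/-- The principal upper set `{S ⊆ X : C ⊆ S}`. -/
def upSet {m : ℕ} (C : Finset (Fin m)) : Finset (Finset (Fin m)) :=
  Finset.univ.filter (fun S => C ⊆ S)

lemma mem_upSet {m : ℕ} {C S : Finset (Fin m)} : S ∈ upSet C ↔ C ⊆ S := by
  simp [upSet]

lemma upSet_inter {m : ℕ} (C D : Finset (Fin m)) :
    upSet C ∩ upSet D = upSet (C ∪ D) := by
  ext S; simp [mem_upSet, union_subset_iff, and_comm]

lemma upSet_infs {m : ℕ} (C D : Finset (Fin m)) :
    upSet C ⊼ upSet D = upSet (C ∩ D) := by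
  ext U
  simp only [mem_infs, mem_upSet, inf_eq_inter]
  constructor
  · rintro ⟨s, hs, t, ht, rfl⟩
    exact inter_subset_inter hs ht
  · intro h
    exact ⟨U ∪ C, subset_union_right, U ∪ D, subset_union_right, by
      rw [← union_inter_distrib_left]; exact union_eq_left.2 h⟩

lemma upSet_sups {m : ℕ} (C D : Finset (Fin m)) :
    upSet C ⊻ upSet D = upSet (C ∪ D) := by
  ext U
  simp only [mem_sups, mem_upSet, sup_eq_union]
  constructor
  · rintro ⟨s, hs, t, ht, rfl⟩
    exact union_subset (hs.trans subset_union_left) (ht.trans subset_union_right)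
  · intro h
    exact ⟨U, subset_union_left.trans h, U, subset_union_right.trans h, union_self U⟩

lemma famMeas_nonneg {m : ℕ} {μ : Finset (Fin m) → ℝ} (hμ : IsProbMeasure μ)
    (𝒜 : Finset (Finset (Fin m))) : 0 ≤ famMeas μ 𝒜 :=
  Finset.sum_nonneg fun A _ => hμ.1 A

lemma famMeas_le_one {m : ℕ} {μ : Finset (Fin m) → ℝ} (hμ : IsProbMeasure μ)
    (𝒜 : Finset (Finset (Fin m))) : famMeas μ 𝒜 ≤ 1 := by
  rw [← hμ.2]
  exact Finset.sum_le_sum_of_subset_of_nonneg (subset_univ _) fun A _ _ => hμ.1 A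

lemma famMeas_upSet_mono {m : ℕ} {μ : Finset (Fin m) → ℝ} (hμ : IsProbMeasure μ)
    {C D : Finset (Fin m)} (h : C ⊆ D) : famMeas μ (upSet D) ≤ famMeas μ (upSet C) :=
  Finset.sum_le_sum_of_subset_of_nonneg
    (fun S hS => mem_upSet.2 (h.trans (mem_upSet.1 hS))) fun A _ _ => hμ.1 A

/-- Log-supermodularity of `C ↦ μ(upSet C)`, via the four functions theorem. -/
lemma famMeas_upSet_supermod {m : ℕ} {μ : Finset (Fin m) → ℝ} (hμ : IsProbMeasure μ)
    (hFKG : FKGCondition μ) (C D : Finset (Fin m)) :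
    famMeas μ (upSet C) * famMeas μ (upSet D) ≤
      famMeas μ (upSet (C ∩ D)) * famMeas μ (upSet (C ∪ D)) := by
  have h := four_functions_theorem μ μ μ μ hμ.1 hμ.1 hμ.1 hμ.1
    (fun A B => by simpa [inf_eq_inter, sup_eq_union] using hFKG A B)
    (upSet C) (upSet D)
  rwa [upSet_infs, upSet_sups] at h

theorem E3_nonneg
    {m : ℕ} (μ : Finset (Fin m) → ℝ) (hμ : IsProbMeasure μ) (hFKG : FKGCondition μ)
    (C₁ C₂ C₃ : Finset (Fin m)) :
    0 ≤ 2 * famMeas μ (upSet C₁ ∩ upSet C₂ ∩ upSet C₃) -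
        (famMeas μ (upSet C₁) * famMeas μ (upSet C₂ ∩ upSet C₃) +
          famMeas μ (upSet C₂) * famMeas μ (upSet C₁ ∩ upSet C₃) +
          famMeas μ (upSet C₃) * famMeas μ (upSet C₁ ∩ upSet C₂) -
          famMeas μ (upSet C₁) * famMeas μ (upSet C₂) * famMeas μ (upSet C₃)) := by
  rw [upSet_inter C₁ C₂, upSet_inter (C₁ ∪ C₂) C₃, upSet_inter C₂ C₃, upSet_inter C₁ C₃]
  set G : Finset (Fin m) → ℝ := fun C => famMeas μ (upSet C) with hG
  set a := G C₁; set b := G C₂; set c := G C₃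
  set p := G (C₂ ∪ C₃); set q := G (C₁ ∪ C₃); set r := G (C₁ ∪ C₂)
  set x := G (C₁ ∪ C₂ ∪ C₃)
  have hnn : ∀ C, 0 ≤ G C := fun C => famMeas_nonneg hμ _
  have hle1 : ∀ C, G C ≤ 1 := fun C => famMeas_le_one hμ _
  have hmono : ∀ {C D : Finset (Fin m)}, C ⊆ D → G D ≤ G C :=
    fun h => famMeas_upSet_mono hμ h
  have hsm : ∀ C D, G C * G D ≤ G (C ∩ D) * G (C ∪ D) :=
    fun C D => famMeas_upSet_supermod hμ hFKG C D
  -- basic bounds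
  have hx0 : 0 ≤ x := hnn _
  have ha0 : 0 ≤ a := hnn _
  have hb0 : 0 ≤ b := hnn _
  have hc0 : 0 ≤ c := hnn _
  have hp0 : 0 ≤ p := hnn _
  have hq0 : 0 ≤ q := hnn _
  have hr0 : 0 ≤ r := hnn _
  -- products bounded by x
  have key : ∀ C D : Finset (Fin m), C ∪ D = C₁ ∪ C₂ ∪ C₃ → G C * G D ≤ x := by
    intro C D hCD
    calc G C * G D ≤ G (C ∩ D) * G (C ∪ D) := hsm C D
    _ ≤ 1 * G (C ∪ D) := by
        apply mul_le_mul_of_nonneg_right (hle1 _) (hnn _)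
    _ = x := by rw [one_mul, hCD]
  have hap : a * p ≤ x := key C₁ (C₂ ∪ C₃) (by rw [union_assoc])
  have hbq : b * q ≤ x := key C₂ (C₁ ∪ C₃) (by ac_rfl)
  have hcr : c * r ≤ x := key C₃ (C₁ ∪ C₂) (by ac_rfl)
  -- mixed products
  have key2 : ∀ (C D E : Finset (Fin m)), E ⊆ C ∩ D → C ∪ D = C₁ ∪ C₂ ∪ C₃ →
      G C * G D ≤ G E * x := by
    intro C D E hE hCD
    calc G C * G D ≤ G (C ∩ D) * G (C ∪ D) := hsm C D
    _ ≤ G E * x := by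
        rw [hCD]
        exact mul_le_mul_of_nonneg_right (hmono hE) hx0
  have hqr : q * r ≤ a * x := key2 (C₁ ∪ C₃) (C₁ ∪ C₂)
    C₁ (subset_inter subset_union_left subset_union_left) (by ac_rfl)
  have hpr : p * r ≤ b * x := key2 (C₂ ∪ C₃) (C₁ ∪ C₂)
    C₂ (subset_inter subset_union_left subset_union_right) (by ac_rfl)
  have hpq : p * q ≤ c * x := key2 (C₂ ∪ C₃) (C₁ ∪ C₃)
    C₃ (subset_inter subset_union_right subset_union_right) (by ac_rfl)
  -- pairwise correlation
  have hbc : b * c ≤ p := by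
    calc b * c ≤ G (C₂ ∩ C₃) * p := hsm C₂ C₃
    _ ≤ 1 * p := mul_le_mul_of_nonneg_right (hle1 _) hp0
    _ = p := one_mul p
  -- now pure arithmetic
  have habc0 : 0 ≤ a * b * c := mul_nonneg (mul_nonneg ha0 hb0) hc0
  have huv : (a * p) * (b * q) ≤ (a * b * c) * x := by
    have h := mul_le_mul_of_nonneg_left hpq (mul_nonneg ha0 hb0)
    calc (a * p) * (b * q) = a * b * (p * q) := by ring
    _ ≤ a * b * (c * x) := h
    _ = (a * b * c) * x := by ring
  rcases eq_or_lt_of_le hx0 with hx | hx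
  · have h1 : 0 ≤ a * p := mul_nonneg ha0 hp0
    have h2 : 0 ≤ b * q := mul_nonneg hb0 hq0
    have h3 : 0 ≤ c * r := mul_nonneg hc0 hr0
    linarith [hap, hbq, hcr]
  · have h1 : 0 ≤ (x - a * p) * (x - b * q) :=
      mul_nonneg (by linarith [hap]) (by linarith [hbq])
    have h2 : x * (c * r) ≤ x * x := mul_le_mul_of_nonneg_left hcr hx0
    nlinarith [h1, huv, h2, hx]

end
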